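/- Let F be a simplicial function space and 𝒯 a simplicial complex of maximal dimension n containing at least one face of each dimension m+1 ≤ n. If the face poset of 𝒯 admits local extension operators E^𝒯_K for all faces K, then F admits simplicial extension operators E_m : F̊(T^m) → F(Q^{m+1}) for every m < n. -/

import Mathlib

open CategoryTheory Opposite

-- A simplicial function space: a contravariant functor from (vertex sets of) simplices
-- with simplicial maps — equivalently, finite sets with arbitrary maps — to real vector
-- spaces.  A simplicial map between simplices is the affine map determined by an
-- arbitrary map of vertex sets.
variable (𝓕 : FintypeCatᵒᵖ ⥤ ModuleCat ℝ)

-- The ambient vertex set of the simplicial complex.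
variable {Vt : Type} [DecidableEq Vt]

/-- The inclusion of the vertex set of a subface. -/
def inclF {G F : Finset Vt} (h : G ⊆ F) :
    FintypeCat.of (↥G) ⟶ FintypeCat.of (↥F) :=
  FintypeCat.homMk fun x => ⟨x.1, h x.2⟩

/-- The value of the simplicial function space on (the simplex with) a vertex set. -/
abbrev Fobj (α : Type) [Fintype α] := 𝓕.obj (op (FintypeCat.of α))

/-- The trace (restriction) map to a subface. -/
def trF {G F : Finset Vt} (h : G ⊆ F) : Fobj 𝓕 ↥F →ₗ[ℝ] Fobj 𝓕 ↥G :=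
  (𝓕.map (inclF h).op).hom

/-- The inclusion of a face of a simplex, as a map of vertex sets. -/
def inclA {α : Type} [Fintype α] (S : Finset α) :
    FintypeCat.of (↥S) ⟶ FintypeCat.of α :=
  FintypeCat.homMk fun x => x.1

/-- The vanishing-trace subspace: elements whose trace to every proper (nonempty)
face vanishes. -/
def vanishA (α : Type) [Fintype α] [DecidableEq α] : Submodule ℝ (Fobj 𝓕 α) where
  carrier := {φ | ∀ S : Finset α, S.Nonempty → S ≠ Finset.univ →
    𝓕.map (inclA S).op φ = 0}
  add_mem' := by intro a b ha hb S h1 h2; simp [map_add, ha S h1 h2, hb S h1 h2]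
  zero_mem' := by intro S h1 h2; simp
  smul_mem' := by intro c a ha S h1 h2; simp [map_smul, ha S h1 h2]

/-- The global function space of a simplicial complex with face set `faces`,
as an inverse limit over the face poset. -/
def GlobC (faces : Set (Finset Vt)) :
    Submodule ℝ (∀ F : faces, Fobj 𝓕 ↥F.1) where
  carrier := {φ | ∀ (G F : faces) (h : G.1 ⊆ F.1), trF 𝓕 h (φ F) = φ G}
  add_mem' := by intro a b ha hb G F h; simp [map_add, ha G F h, hb G F h]
  zero_mem' := by intro G F h; simp
  smul_mem' := by intro c a ha G F h; simp [map_smul, ha G F h]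

-- The standard m-simplex T^m has vertex set Fin (m+1); the standard (m+1)-simplex
-- Q^(m+1) has vertex set Fin (m+2), with T^m included as the face missing the last
-- vertex (the origin).
def castMap (m : ℕ) : FintypeCat.of (Fin (m + 1)) ⟶ FintypeCat.of (Fin (m + 2)) :=
  FintypeCat.homMk Fin.castSucc

-- T^m as a face (vertex subset) of Q^(m+1).
def Tface (m : ℕ) : Finset (Fin (m + 2)) :=
  (Finset.univ : Finset (Fin (m + 1))).image Fin.castSucc

/-! An (m+1)-face `F` of the complex, with its vertices enumerated by those of `Q^(m+1)`, carries
`T^m` onto an m-face `K`. Transport `ψ` to `K`, extend it by the local operator `E_K` to a global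
function, and pull its value on `F` back to `Q^(m+1)`. Since global functions are compatible with
traces, the trace of the result to a face `S` of `Q^(m+1)` is the value of the global function on
the image face of `S`: for `S = T^m` this is `ψ`, and for `S ⊉ T^m` it vanishes by locality of
`E_K`. A proper face `S ≠ T^m` cannot contain `T^m`, which has codimension one. -/

section Pullback

variable {α β : Type} [Fintype α] [Fintype β] (e : α ≃ β)

lemma map_homMk_mem_vanishA [DecidableEq α] [DecidableEq β] {φ : Fobj 𝓕 β}
    (hφ : φ ∈ vanishA 𝓕 β) :
    𝓕.map (FintypeCat.homMk e).op φ ∈ vanishA 𝓕 α := by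
  intro S hS hSu
  have hfactor : inclA S ≫ FintypeCat.homMk e =
      FintypeCat.homMk (Finset.equivMap e.toEmbedding S) ≫ inclA (S.map e.toEmbedding) := rfl
  have hSu' : S.map e.toEmbedding ≠ Finset.univ := by
    rwa [← Finset.map_univ_equiv e, Ne, Finset.map_inj]
  rw [← Functor.map_comp_apply, ← op_comp, hfactor, op_comp, Functor.map_comp_apply,
    hφ _ hS.map hSu', map_zero]

noncomputable def vanishPullback [DecidableEq α] [DecidableEq β] :
    vanishA 𝓕 β →ₗ[ℝ] vanishA 𝓕 α :=
  LinearMap.restrict (𝓕.map (FintypeCat.homMk e).op).hom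
    fun _ hφ => map_homMk_mem_vanishA 𝓕 e hφ

lemma vanishPullback_coe [DecidableEq α] [DecidableEq β] (ψ : vanishA 𝓕 β) :
    (vanishPullback 𝓕 e ψ : Fobj 𝓕 α) = 𝓕.map (FintypeCat.homMk e).op (ψ : Fobj 𝓕 β) :=
  rfl

lemma map_homMk_map_homMk_symm (x : Fobj 𝓕 α) :
    𝓕.map (FintypeCat.homMk e : FintypeCat.of α ⟶ FintypeCat.of β).op
      (𝓕.map (FintypeCat.homMk e.symm).op x) = x := by
  have hinv : (FintypeCat.homMk e : FintypeCat.of α ⟶ FintypeCat.of β) ≫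
      FintypeCat.homMk e.symm = 𝟙 _ := by
    ext a
    exact e.symm_apply_apply a
  rw [← Functor.map_comp_apply, ← op_comp, hinv, op_id, Functor.map_id_apply]

end Pullback

lemma GlobC.map_comp_inclF_apply {V : Type} {faces : Set (Finset V)} (φ : GlobC 𝓕 faces)
    {G F : Finset V} (hG : G ∈ faces) (hF : F ∈ faces) (h : G ⊆ F) {A : FintypeCat}
    (a : A ⟶ FintypeCat.of ↥G) :
    𝓕.map (a ≫ inclF h).op ((φ : ∀ F : faces, Fobj 𝓕 ↥F.1) ⟨F, hF⟩) =
      𝓕.map a.op ((φ : ∀ F : faces, Fobj 𝓕 ↥F.1) ⟨G, hG⟩) := by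
  rw [op_comp, Functor.map_comp_apply]
  exact congrArg _ (φ.2 ⟨G, hG⟩ ⟨F, hF⟩ h)

noncomputable def univEquivMap {β : Type} [Fintype β] (ι : β ↪ Vt) :
    β ≃ ↥(Finset.univ.map ι) :=
  (Equiv.subtypeUnivEquiv Finset.mem_univ).symm.trans (Finset.equivMap ι Finset.univ)

section FaceExtension

variable {faces : Set (Finset Vt)} (Eloc : ∀ K : faces, vanishA 𝓕 ↥K.1 →ₗ[ℝ] GlobC 𝓕 faces)
  {α β : Type} [Fintype α] [DecidableEq α] [Fintype β] (j : α ↪ β) (ι : β ↪ Vt)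
  (hF : Finset.univ.map ι ∈ faces) (hK : Finset.univ.map (j.trans ι) ∈ faces)

-- The paper's `((Φ^T_K)^*)^{-1} ∘ E^T_K ∘ (Ψ^K_K)^*`, for `T = univ.map ι` and
-- `K = univ.map (j.trans ι)`.
noncomputable def faceExtension : vanishA 𝓕 α →ₗ[ℝ] Fobj 𝓕 β :=
  (𝓕.map (FintypeCat.homMk (univEquivMap ι)).op).hom ∘ₗ
    LinearMap.proj (⟨_, hF⟩ : faces) ∘ₗ (GlobC 𝓕 faces).subtype ∘ₗ Eloc ⟨_, hK⟩ ∘ₗ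
      vanishPullback 𝓕 (univEquivMap (j.trans ι)).symm

lemma faceExtension_apply (ψ : vanishA 𝓕 α) :
    faceExtension 𝓕 Eloc j ι hF hK ψ = 𝓕.map (FintypeCat.homMk (univEquivMap ι)).op
      ((Eloc ⟨_, hK⟩ (vanishPullback 𝓕 (univEquivMap (j.trans ι)).symm ψ) :
        ∀ F : faces, Fobj 𝓕 ↥F.1) ⟨_, hF⟩) :=
  rfl

lemma faceExtension_map_apply
    (hL1 : ∀ (K : faces) (ψ : vanishA 𝓕 ↥K.1),
      ((Eloc K ψ : ∀ F : faces, Fobj 𝓕 ↥F.1) K) = (ψ : Fobj 𝓕 ↥K.1))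
    (ψ : vanishA 𝓕 α) :
    𝓕.map (FintypeCat.homMk j).op (faceExtension 𝓕 Eloc j ι hF hK ψ) = (ψ : Fobj 𝓕 α) := by
  have hKF : Finset.univ.map (j.trans ι) ⊆ Finset.univ.map ι := by
    rw [← Finset.map_map]
    exact Finset.map_subset_map.2 (Finset.subset_univ _)
  have hfactor : (FintypeCat.homMk j : FintypeCat.of α ⟶ FintypeCat.of β) ≫
      FintypeCat.homMk (univEquivMap ι) =
        FintypeCat.homMk (univEquivMap (j.trans ι)) ≫ inclF hKF := rfl
  rw [faceExtension_apply, ← Functor.map_comp_apply, ← op_comp, hfactor,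
    GlobC.map_comp_inclF_apply 𝓕 _ hK hF, hL1, vanishPullback_coe,
    map_homMk_map_homMk_symm]

lemma faceExtension_map_inclA_eq_zero
    (hL2 : ∀ (K F : faces), ¬ K.1 ⊆ F.1 → ∀ ψ : vanishA 𝓕 ↥K.1,
      ((Eloc K ψ : ∀ F : faces, Fobj 𝓕 ↥F.1) F) = 0)
    {S : Finset β} (hS : S.map ι ∈ faces) (hjS : ¬ Finset.univ.map j ⊆ S) (ψ : vanishA 𝓕 α) :
    𝓕.map (inclA S).op (faceExtension 𝓕 Eloc j ι hF hK ψ) = 0 := by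
  have hfactor : inclA S ≫ FintypeCat.homMk (univEquivMap ι) =
      FintypeCat.homMk (Finset.equivMap ι S) ≫
        inclF (Finset.map_subset_map.2 (Finset.subset_univ S)) := rfl
  have hKS : ¬ Finset.univ.map (j.trans ι) ⊆ S.map ι := by
    rwa [← Finset.map_map, Finset.map_subset_map]
  rw [faceExtension_apply, ← Functor.map_comp_apply, ← op_comp, hfactor,
    GlobC.map_comp_inclF_apply 𝓕 _ hS hF, hL2 _ _ hKS, map_zero]

end FaceExtension

lemma Finset.not_subset_of_ne_of_ne_univ {γ : Type} [Fintype γ] {s t : Finset γ}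
    (ht : t.card + 1 = Fintype.card γ) (hs : s ≠ Finset.univ) (hst : s ≠ t) : ¬ t ⊆ s := by
  intro hts
  have hlt := Finset.card_lt_card (Finset.ssubset_univ_iff.2 hs)
  rw [Finset.card_univ] at hlt
  exact hst (Finset.eq_of_subset_of_card_le hts (by omega)).symm

lemma Tface_eq_map (m : ℕ) : Tface m = Finset.univ.map Fin.castSuccEmb := by
  rw [Tface, Finset.map_eq_image]
  rfl

theorem local_extension_operators_yield_simplicial_extension_operators
    (n : ℕ)
    (faces : Set (Finset Vt))
    (hdown : ∀ F ∈ faces, ∀ G : Finset Vt, G ⊆ F → G.Nonempty → G ∈ faces)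
    (hex : ∀ m : ℕ, m ≤ n → ∃ F ∈ faces, F.card = m + 1)
    (Eloc : ∀ K : faces, vanishA 𝓕 ↥K.1 →ₗ[ℝ] GlobC 𝓕 faces)
    (hL1 : ∀ (K : faces) (ψ : vanishA 𝓕 ↥K.1),
      ((Eloc K ψ : ∀ F : faces, Fobj 𝓕 ↥F.1) K) = (ψ : Fobj 𝓕 ↥K.1))
    (hL2 : ∀ (K F : faces), ¬ K.1 ⊆ F.1 → ∀ ψ : vanishA 𝓕 ↥K.1,
      ((Eloc K ψ : ∀ F : faces, Fobj 𝓕 ↥F.1) F) = 0) :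
    ∀ m, m < n → ∃ Em : vanishA 𝓕 (Fin (m + 1)) →ₗ[ℝ] Fobj 𝓕 (Fin (m + 2)),
      (∀ ψ : vanishA 𝓕 (Fin (m + 1)),
        𝓕.map (castMap m).op (Em ψ) = (ψ : Fobj 𝓕 (Fin (m + 1)))) ∧
      (∀ S : Finset (Fin (m + 2)), S.Nonempty → S ≠ Finset.univ → S ≠ Tface m →
        ∀ ψ : vanishA 𝓕 (Fin (m + 1)), 𝓕.map (inclA S).op (Em ψ) = 0) := by
  intro m hm
  obtain ⟨F, hF, hFcard⟩ := hex (m + 1) hm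
  let ι : Fin (m + 2) ↪ Vt :=
    (F.equivFinOfCardEq hFcard).symm.toEmbedding.trans (Function.Embedding.subtype _)
  have hface : ∀ S : Finset (Fin (m + 2)), S.Nonempty → S.map ι ∈ faces := fun S hS =>
    hdown F hF _
      (fun x hx => by obtain ⟨i, -, rfl⟩ := Finset.mem_map.1 hx; exact Subtype.prop _) hS.map
  have hK : Finset.univ.map (Fin.castSuccEmb.trans ι) ∈ faces := by
    rw [← Finset.map_map]
    exact hface _ Finset.univ_nonempty.map
  refine ⟨faceExtension 𝓕 Eloc Fin.castSuccEmb ι (hface _ Finset.univ_nonempty) hK,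
    faceExtension_map_apply 𝓕 Eloc Fin.castSuccEmb ι _ hK hL1, fun S hS hSu hST =>
      faceExtension_map_inclA_eq_zero 𝓕 Eloc _ _ _ _ hL2 (hface S hS) ?_⟩
  rw [← Tface_eq_map]
  exact Finset.not_subset_of_ne_of_ne_univ (by simp [Tface_eq_map]) hSu hST
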